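/- Let X be a separable metric space and ≿ a preorder on Δ₁(X). Then ≿ is Lipschitz and affine if and only if there exists a nonempty family 𝒰 of Lipschitz functions on X such that for all p, q ∈ Δ₁(X): p ≿ q iff ∫ u dp ≥ ∫ u dq for every u ∈ 𝒰. -/

import Mathlib

open MeasureTheory

/-- A real-valued Lipschitz function. -/
def IsLip {X : Type*} [MetricSpace X] (f : X → ℝ) : Prop :=
  ∃ K : NNReal, LipschitzWith K f

/-- Membership in Δ₁(X). -/
def MemDelta1 {X : Type*} [MetricSpace X] [MeasurableSpace X] (p : Measure X) : Prop :=
  IsProbabilityMeasure p ∧ ∀ f : X → ℝ, IsLip f → Integrable f p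

/-- The Wasserstein 1-metric, via Kantorovich–Rubinstein duality. -/
noncomputable def W1 {X : Type*} [MetricSpace X] [MeasurableSpace X]
    (p q : Measure X) : ℝ :=
  ⨆ f : {f : X → ℝ // LipschitzWith 1 f}, |∫ x, f.1 x ∂p - ∫ x, f.1 x ∂q|

/-- The mixture (1 − λ)p + λq of two measures. -/
noncomputable def mix {X : Type*} [MeasurableSpace X] (p q : Measure X) (lam : ℝ) :
    Measure X :=
  ENNReal.ofReal (1 - lam) • p + ENNReal.ofReal lam • q

/-- The preorder ≿ is affine on Δ₁(X). -/
def AffinePre {X : Type*} [MetricSpace X] [MeasurableSpace X]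
    (R : Measure X → Measure X → Prop) : Prop :=
  ∀ p q r : Measure X, MemDelta1 p → MemDelta1 q → MemDelta1 r →
    ∀ lam : ℝ, 0 ≤ lam → lam < 1 →
      (R p q ↔ R (mix p r lam) (mix q r lam))

/-- The preorder ≿ is Lipschitz on Δ₁(X). -/
def LipschitzPre {X : Type*} [MetricSpace X] [MeasurableSpace X]
    (R : Measure X → Measure X → Prop) : Prop :=
  ∀ p q : Measure X, MemDelta1 p → MemDelta1 q → ¬ R q p →
    ∃ K : ℝ, 0 < K ∧ ∀ p' q' : Measure X, MemDelta1 p' → MemDelta1 q' →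
      ∀ lam : ℝ, 0 ≤ lam → lam < K / (K + W1 p' q') →
        ¬ R (mix q q' lam) (mix p p' lam)

section Basics

set_option linter.unusedSectionVars false
variable {X : Type*} [MetricSpace X] [MeasurableSpace X] [BorelSpace X]

instance instNonemptyLip1 : Nonempty {f : X → ℝ // LipschitzWith 1 f} :=
  ⟨⟨fun _ => 0, LipschitzWith.const' 0⟩⟩

theorem MemDelta1.nonempty {p : Measure X} (hp : MemDelta1 p) : Nonempty X := by
  by_contra h
  have : p Set.univ = 0 := by
    have : (Set.univ : Set X) = ∅ := by
      simpa [Set.eq_empty_iff_forall_notMem] using fun x => h ⟨x⟩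
    simp [this]
  have h1 : p Set.univ = 1 := hp.1.measure_univ
  simp [this] at h1

theorem MemDelta1.integrable {p : Measure X} (hp : MemDelta1 p) {f : X → ℝ} {K : NNReal}
    (hf : LipschitzWith K f) : Integrable f p := hp.2 f ⟨K, hf⟩

theorem MemDelta1.integrable_dist {p : Measure X} (hp : MemDelta1 p) (x₀ : X) :
    Integrable (fun x => dist x x₀) p := hp.integrable (LipschitzWith.dist_left x₀)

/-- The fundamental bound: for 1-Lipschitz f, `|∫ f dp − ∫ f dq|` is bounded uniformly. -/
theorem abs_integral_sub_le {p q : Measure X} (hp : MemDelta1 p) (hq : MemDelta1 q)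
    (x₀ : X) {f : X → ℝ} (hf : LipschitzWith 1 f) :
    |∫ x, f x ∂p - ∫ x, f x ∂q| ≤
      (∫ x, dist x x₀ ∂p) + ∫ x, dist x x₀ ∂q := by
  have hip : Integrable f p := hp.integrable hf
  have hiq : Integrable f q := hq.integrable hf
  have hp1 : IsProbabilityMeasure p := hp.1
  have hq1 : IsProbabilityMeasure q := hq.1
  have key : ∀ (r : Measure X), MemDelta1 r → Integrable f r →
      |∫ x, f x ∂r - f x₀| ≤ ∫ x, dist x x₀ ∂r := by
    intro r hr hir
    have h1 : IsProbabilityMeasure r := hr.1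
    have : ∫ x, f x ∂r - f x₀ = ∫ x, (f x - f x₀) ∂r := by
      rw [integral_sub hir (integrable_const _)]
      simp
    rw [this]
    calc |∫ x, (f x - f x₀) ∂r| ≤ ∫ x, |f x - f x₀| ∂r :=
          by simpa using norm_integral_le_integral_norm (μ := r) (fun x => f x - f x₀)
      _ ≤ ∫ x, dist x x₀ ∂r := by
          apply integral_mono (hir.sub (integrable_const _)).abs (hr.integrable_dist x₀)
          intro x
          simpa [Real.dist_eq] using hf.dist_le_mul x x₀
  calc |∫ x, f x ∂p - ∫ x, f x ∂q|
      = |(∫ x, f x ∂p - f x₀) - (∫ x, f x ∂q - f x₀)| := by ring_nf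
    _ ≤ |∫ x, f x ∂p - f x₀| + |∫ x, f x ∂q - f x₀| := abs_sub _ _
    _ ≤ _ := add_le_add (key p hp hip) (key q hq hiq)

theorem bddAbove_W1 {p q : Measure X} (hp : MemDelta1 p) (hq : MemDelta1 q) :
    BddAbove (Set.range fun f : {f : X → ℝ // LipschitzWith 1 f} =>
      |∫ x, f.1 x ∂p - ∫ x, f.1 x ∂q|) := by
  obtain ⟨x₀⟩ := hp.nonempty
  exact ⟨(∫ x, dist x x₀ ∂p) + ∫ x, dist x x₀ ∂q, by
    rintro r ⟨f, rfl⟩; exact abs_integral_sub_le hp hq x₀ f.2⟩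

theorem W1_nonneg (p q : Measure X) : 0 ≤ W1 p q :=
  Real.iSup_nonneg fun _ => abs_nonneg _

theorem le_W1 {p q : Measure X} (hp : MemDelta1 p) (hq : MemDelta1 q)
    {f : X → ℝ} (hf : LipschitzWith 1 f) :
    |∫ x, f x ∂p - ∫ x, f x ∂q| ≤ W1 p q :=
  le_ciSup (bddAbove_W1 hp hq) (⟨f, hf⟩ : {f : X → ℝ // LipschitzWith 1 f})

theorem W1_le {p q : Measure X} {c : ℝ}
    (h : ∀ f : X → ℝ, LipschitzWith 1 f → |∫ x, f x ∂p - ∫ x, f x ∂q| ≤ c) :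
    W1 p q ≤ c :=
  ciSup_le fun f => h f.1 f.2

/-- Integrals of L-Lipschitz functions are W1-continuous. -/
theorem abs_integral_sub_le_W1 {p q : Measure X} (hp : MemDelta1 p) (hq : MemDelta1 q)
    {u : X → ℝ} {L : NNReal} (hu : LipschitzWith L u) :
    |∫ x, u x ∂p - ∫ x, u x ∂q| ≤ (L : ℝ) * W1 p q := by
  rcases eq_or_ne L 0 with rfl | hL
  · have : ∀ x y : X, u x = u y := by
      intro x y
      have := hu.dist_le_mul x y
      simpa [dist_le_zero] using this
    rcases isEmpty_or_nonempty X with hX | ⟨⟨x₀⟩⟩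
    · simp [integral_of_isEmpty]
    · have hu' : u = fun _ => u x₀ := funext fun x => this x x₀
      rw [hu']
      have := hp.1; have := hq.1
      simp
  · have hL' : (0 : ℝ) < L := by positivity
    set f : X → ℝ := fun x => (L : ℝ)⁻¹ * u x with hfdef
    have hf : LipschitzWith 1 f := by
      apply LipschitzWith.of_dist_le_mul
      intro x y
      have := hu.dist_le_mul x y
      rw [Real.dist_eq] at this ⊢
      simp only [hfdef]
      rw [← mul_sub, abs_mul, abs_of_nonneg (by positivity : (0:ℝ) ≤ (L:ℝ)⁻¹)]
      rw [NNReal.coe_one, one_mul]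
      calc (L:ℝ)⁻¹ * |u x - u y| ≤ (L:ℝ)⁻¹ * ((L:ℝ) * dist x y) := by
            apply mul_le_mul_of_nonneg_left _ (by positivity)
            simpa [Real.dist_eq] using this
        _ = dist x y := by field_simp
    have h1 := le_W1 hp hq hf
    have h2 : ∫ x, f x ∂p = (L : ℝ)⁻¹ * ∫ x, u x ∂p := by
      simp only [hfdef]; rw [integral_const_mul]
    have h3 : ∫ x, f x ∂q = (L : ℝ)⁻¹ * ∫ x, u x ∂q := by
      simp only [hfdef]; rw [integral_const_mul]
    rw [h2, h3, ← mul_sub, abs_mul, abs_of_nonneg (by positivity : (0:ℝ) ≤ (L:ℝ)⁻¹)] at h1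
    calc |∫ x, u x ∂p - ∫ x, u x ∂q|
        = (L:ℝ) * ((L:ℝ)⁻¹ * |∫ x, u x ∂p - ∫ x, u x ∂q|) := by field_simp
      _ ≤ (L:ℝ) * W1 p q := mul_le_mul_of_nonneg_left h1 (by positivity)

end Basics
section Comb

set_option linter.unusedSectionVars false
variable {X : Type*} [MetricSpace X] [MeasurableSpace X] [BorelSpace X]

theorem memDelta1_smul_add {p q : Measure X} (hp : MemDelta1 p) (hq : MemDelta1 q)
    {a b : ℝ} (ha : 0 ≤ a) (hb : 0 ≤ b) (hab : a + b = 1) :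
    MemDelta1 (ENNReal.ofReal a • p + ENNReal.ofReal b • q) := by
  have hp1 := hp.1; have hq1 := hq.1
  constructor
  · constructor
    simp [ENNReal.smul_def, ← ENNReal.ofReal_add ha hb, hab]
  · intro f hf
    exact ((hp.2 f hf).smul_measure ENNReal.ofReal_ne_top).add_measure
      ((hq.2 f hf).smul_measure ENNReal.ofReal_ne_top)

theorem memDelta1_dirac (x : X) : MemDelta1 (Measure.dirac x) := by
  constructor
  · exact Measure.dirac.isProbabilityMeasure
  · intro f hf
    rcases hf with ⟨K, hK⟩
    have hm := hK.continuous.measurable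
    refine ⟨hm.aestronglyMeasurable, ?_⟩
    have : ∫⁻ x, ‖f x‖ₑ ∂(Measure.dirac x) = ‖f x‖ₑ :=
      lintegral_dirac' x (by measurability)
    rw [HasFiniteIntegral, this]
    exact ENNReal.coe_lt_top

theorem mix_memDelta1 {p q : Measure X} (hp : MemDelta1 p) (hq : MemDelta1 q)
    {lam : ℝ} (h0 : 0 ≤ lam) (h1 : lam ≤ 1) : MemDelta1 (mix p q lam) :=
  memDelta1_smul_add hp hq (by linarith) h0 (by ring)

theorem integral_smul_add_measure {p q : Measure X} {f : X → ℝ}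
    (hfp : Integrable f p) (hfq : Integrable f q) {a b : ℝ} (ha : 0 ≤ a) (hb : 0 ≤ b) :
    ∫ x, f x ∂(ENNReal.ofReal a • p + ENNReal.ofReal b • q)
      = a * ∫ x, f x ∂p + b * ∫ x, f x ∂q := by
  rw [integral_add_measure (hfp.smul_measure ENNReal.ofReal_ne_top)
    (hfq.smul_measure ENNReal.ofReal_ne_top), integral_smul_measure, integral_smul_measure,
    ENNReal.toReal_ofReal ha, ENNReal.toReal_ofReal hb]
  simp

theorem integral_mix {p q : Measure X} {f : X → ℝ}
    (hfp : Integrable f p) (hfq : Integrable f q) {lam : ℝ} (h0 : 0 ≤ lam) (h1 : lam ≤ 1) :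
    ∫ x, f x ∂(mix p q lam) = (1 - lam) * ∫ x, f x ∂p + lam * ∫ x, f x ∂q :=
  integral_smul_add_measure hfp hfq (by linarith) h0

/-- Reconstruct a measure identity from a pointwise real identity. -/
theorem measure_eq_of_toReal {p q r w : Measure X}
    [IsFiniteMeasure p] [IsFiniteMeasure q] [IsFiniteMeasure r] [IsFiniteMeasure w]
    {a b c d : ℝ} (ha : 0 ≤ a) (hb : 0 ≤ b) (hc : 0 ≤ c) (hd : 0 ≤ d)
    (h : ∀ s : Set X, MeasurableSet s →
      a * (p s).toReal + b * (q s).toReal = c * (r s).toReal + d * (w s).toReal) :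
    ENNReal.ofReal a • p + ENNReal.ofReal b • q
      = ENNReal.ofReal c • r + ENNReal.ofReal d • w := by
  ext s hs
  have e1 : ∀ (e : ℝ) (m : Measure X) (_ : IsFiniteMeasure m) (_ : 0 ≤ e),
      (ENNReal.ofReal e • m) s = ENNReal.ofReal (e * (m s).toReal) := by
    intro e m hm he
    rw [ENNReal.ofReal_mul he, ENNReal.ofReal_toReal (measure_ne_top m s)]
    rfl
  rw [Measure.add_apply, Measure.add_apply, e1 a p ‹_› ha, e1 b q ‹_› hb, e1 c r ‹_› hc,
    e1 d w ‹_› hd, ← ENNReal.ofReal_add (by positivity) (by positivity),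
    ← ENNReal.ofReal_add (by positivity) (by positivity), h s hs]

end Comb
section Emb

set_option linter.unusedSectionVars false
set_option maxHeartbeats 800000
variable {X : Type*} [MetricSpace X] [MeasurableSpace X] [BorelSpace X]

theorem MemDelta1.isFiniteMeasure {p : Measure X} (hp : MemDelta1 p) : IsFiniteMeasure p := by
  haveI := hp.1; infer_instance

/-- Formal embedding of `t·(p − q)` as a real-valued set function. -/
def embF (t : ℝ) (p q : Measure X) : {s : Set X // MeasurableSet s} → ℝ :=
  fun s => t * ((p s.1).toReal - (q s.1).toReal)

theorem embF_zero (p q : Measure X) : embF (X := X) 0 p q = 0 := by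
  funext s; simp [embF]

/-- The representable elements. -/
def IsRep (x : {s : Set X // MeasurableSet s} → ℝ) : Prop :=
  ∃ t p q, 0 ≤ t ∧ MemDelta1 p ∧ MemDelta1 q ∧ x = embF t p q

theorem toReal_smul_add {p q : Measure X} (hp : MemDelta1 p) (hq : MemDelta1 q)
    {a b : ℝ} (ha : 0 ≤ a) (hb : 0 ≤ b) (s : Set X) :
    (((ENNReal.ofReal a • p + ENNReal.ofReal b • q) : Measure X) s).toReal
      = a * (p s).toReal + b * (q s).toReal := by
  haveI := hp.isFiniteMeasure; haveI := hq.isFiniteMeasure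
  rw [Measure.add_apply, ENNReal.toReal_add, Measure.smul_apply, Measure.smul_apply,
    smul_eq_mul, smul_eq_mul, ENNReal.toReal_mul, ENNReal.toReal_mul,
    ENNReal.toReal_ofReal ha, ENNReal.toReal_ofReal hb]
  · exact ENNReal.mul_ne_top ENNReal.ofReal_ne_top (measure_ne_top p s)
  · exact ENNReal.mul_ne_top ENNReal.ofReal_ne_top (measure_ne_top q s)

/-- Sum of two representable elements, explicitly. -/
theorem embF_add {t u : ℝ} {p q a b : Measure X} (ht : 0 ≤ t) (hu : 0 ≤ u)
    (hp : MemDelta1 p) (hq : MemDelta1 q) (ha : MemDelta1 a) (hb : MemDelta1 b)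
    (hτ : 0 < t + u) :
    embF t p q + embF u a b
      = embF (t + u) (ENNReal.ofReal (t/(t+u)) • p + ENNReal.ofReal (u/(t+u)) • a)
          (ENNReal.ofReal (t/(t+u)) • q + ENNReal.ofReal (u/(t+u)) • b) := by
  funext s
  have h1 := toReal_smul_add hp ha (by positivity) (by positivity) (a := t/(t+u)) (b := u/(t+u)) s.1
  have h2 := toReal_smul_add hq hb (by positivity) (by positivity) (a := t/(t+u)) (b := u/(t+u)) s.1
  simp only [Pi.add_apply, embF, h1, h2]
  field_simp
  ring

theorem isRep_add {x y : {s : Set X // MeasurableSet s} → ℝ}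
    (hx : IsRep x) (hy : IsRep y) : IsRep (x + y) := by
  obtain ⟨t, p, q, ht, hp, hq, rfl⟩ := hx
  obtain ⟨u, a, b, hu, ha, hb, rfl⟩ := hy
  rcases eq_or_lt_of_le (by positivity : (0:ℝ) ≤ t + u) with h0 | h0
  · have ht0 : t = 0 := by linarith
    have hu0 : u = 0 := by linarith
    refine ⟨0, p, q, le_refl _, hp, hq, ?_⟩
    simp [ht0, hu0, embF_zero]
  · exact ⟨t + u, _, _, le_of_lt h0,
      memDelta1_smul_add hp ha (by positivity) (by positivity) (by field_simp),
      memDelta1_smul_add hq hb (by positivity) (by positivity) (by field_simp),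
      embF_add ht hu hp hq ha hb h0⟩

theorem embF_smul_nonneg {c : ℝ} (t : ℝ) (hc : 0 ≤ c) (p q : Measure X) :
    c • embF t p q = embF (c * t) p q := by
  funext s; simp only [Pi.smul_apply, embF, smul_eq_mul]; ring

theorem embF_smul_neg {c : ℝ} (t : ℝ) (p q : Measure X) :
    c • embF t p q = embF ((-c) * t) q p := by
  funext s; simp only [Pi.smul_apply, embF, smul_eq_mul]; ring

theorem isRep_smul (c : ℝ) {x : {s : Set X // MeasurableSet s} → ℝ}
    (hx : IsRep x) : IsRep (c • x) := by
  obtain ⟨t, p, q, ht, hp, hq, rfl⟩ := hx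
  rcases le_or_gt 0 c with hc | hc
  · exact ⟨c * t, p, q, by positivity, hp, hq, embF_smul_nonneg t hc p q⟩
  · exact ⟨(-c) * t, q, p, by nlinarith, hq, hp, embF_smul_neg t p q⟩

variable (X) in
/-- The span of Δ₁-differences, as a module. -/
def Mspace [Nonempty X] : Submodule ℝ ({s : Set X // MeasurableSet s} → ℝ) where
  carrier := {x | IsRep x}
  add_mem' := isRep_add
  zero_mem' := by
    refine ⟨0, Measure.dirac (Classical.arbitrary X), Measure.dirac (Classical.arbitrary X),
      le_refl _, memDelta1_dirac _, memDelta1_dirac _, (embF_zero _ _).symm⟩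
  smul_mem' := isRep_smul

variable [Nonempty X]

theorem rep_of_mem {y : {s : Set X // MeasurableSet s} → ℝ} (h : y ∈ Mspace X) : IsRep y := h

theorem mem_Mspace_of {t : ℝ} {p q : Measure X} (ht : 0 ≤ t) (hp : MemDelta1 p)
    (hq : MemDelta1 q) : embF t p q ∈ Mspace X := ⟨t, p, q, ht, hp, hq, rfl⟩

/-- Canonical representation data for an element of `Mspace`. -/
noncomputable def repT (x : Mspace X) : ℝ := (rep_of_mem x.2).choose
noncomputable def repP (x : Mspace X) : Measure X := (rep_of_mem x.2).choose_spec.choose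
noncomputable def repQ (x : Mspace X) : Measure X :=
  (rep_of_mem x.2).choose_spec.choose_spec.choose

theorem rep_spec (x : Mspace X) :
    0 ≤ repT x ∧ MemDelta1 (repP x) ∧ MemDelta1 (repQ x) ∧
      (x : {s : Set X // MeasurableSet s} → ℝ) = embF (repT x) (repP x) (repQ x) :=
  (rep_of_mem x.2).choose_spec.choose_spec.choose_spec

/-- The pairing of an element of `Mspace` with a test function. -/
noncomputable def pair (x : Mspace X) (f : X → ℝ) : ℝ :=
  repT x * ((∫ a, f a ∂(repP x)) - ∫ a, f a ∂(repQ x))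

/-- Any two representations give the same measure identity. -/
theorem embF_eq_measure {t u : ℝ} {p q a b : Measure X} (ht : 0 ≤ t) (hu : 0 ≤ u)
    (hp : MemDelta1 p) (hq : MemDelta1 q) (ha : MemDelta1 a) (hb : MemDelta1 b)
    (h : embF t p q = embF u a b) :
    ENNReal.ofReal t • p + ENNReal.ofReal u • b
      = ENNReal.ofReal u • a + ENNReal.ofReal t • q := by
  haveI := hp.isFiniteMeasure; haveI := hq.isFiniteMeasure
  haveI := ha.isFiniteMeasure; haveI := hb.isFiniteMeasure
  apply measure_eq_of_toReal ht hu hu ht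
  intro s hs
  have := congrFun h ⟨s, hs⟩
  simp only [embF] at this
  linarith

/-- Pairing computed from any representation. -/
theorem pair_eq (x : Mspace X) {t : ℝ} {p q : Measure X} (ht : 0 ≤ t)
    (hp : MemDelta1 p) (hq : MemDelta1 q)
    (hx : (x : {s : Set X // MeasurableSet s} → ℝ) = embF t p q)
    {f : X → ℝ} {K : NNReal} (hf : LipschitzWith K f) :
    pair x f = t * ((∫ a, f a ∂p) - ∫ a, f a ∂q) := by
  obtain ⟨ht0, hp0, hq0, hx0⟩ := rep_spec x
  have heq : embF (repT x) (repP x) (repQ x) = embF t p q := by rw [← hx0, hx]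
  have hm := embF_eq_measure ht0 ht hp0 hq0 hp hq heq
  have hint := congrArg (fun μ : Measure X => ∫ a, f a ∂μ) hm
  rw [integral_smul_add_measure (hp0.integrable hf) (hq.integrable hf) ht0 ht,
    integral_smul_add_measure (hp.integrable hf) (hq0.integrable hf) ht ht0] at hint
  simp only [pair]
  linarith

/-- The KR seminorm on `Mspace`. -/
noncomputable def norm1 (x : Mspace X) : ℝ :=
  ⨆ f : {f : X → ℝ // LipschitzWith 1 f}, |pair x f.1|

theorem bddAbove_pair (x : Mspace X) :
    BddAbove (Set.range fun f : {f : X → ℝ // LipschitzWith 1 f} => |pair x f.1|) := by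
  obtain ⟨ht0, hp0, hq0, _⟩ := rep_spec x
  obtain ⟨x₀⟩ := hp0.nonempty
  refine ⟨repT x * ((∫ a, dist a x₀ ∂(repP x)) + ∫ a, dist a x₀ ∂(repQ x)), ?_⟩
  rintro r ⟨f, rfl⟩
  simp only [pair, abs_mul, abs_of_nonneg ht0]
  exact mul_le_mul_of_nonneg_left (abs_integral_sub_le hp0 hq0 x₀ f.2) ht0

theorem pair_le_norm1 (x : Mspace X) {f : X → ℝ} (hf : LipschitzWith 1 f) :
    |pair x f| ≤ norm1 x :=
  le_ciSup (bddAbove_pair x) (⟨f, hf⟩ : {f : X → ℝ // LipschitzWith 1 f})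

theorem norm1_nonneg (x : Mspace X) : 0 ≤ norm1 x :=
  Real.iSup_nonneg fun _ => abs_nonneg _

theorem norm1_le (x : Mspace X) {c : ℝ}
    (h : ∀ f : X → ℝ, LipschitzWith 1 f → |pair x f| ≤ c) : norm1 x ≤ c :=
  ciSup_le fun f => h f.1 f.2

/-- The seminorm computed from any representation. -/
theorem norm1_eq (x : Mspace X) {t : ℝ} {p q : Measure X} (ht : 0 ≤ t)
    (hp : MemDelta1 p) (hq : MemDelta1 q)
    (hx : (x : {s : Set X // MeasurableSet s} → ℝ) = embF t p q) :
    norm1 x = t * W1 p q := by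
  apply le_antisymm
  · apply norm1_le
    intro f hf
    rw [pair_eq x ht hp hq hx hf, abs_mul, abs_of_nonneg ht]
    exact mul_le_mul_of_nonneg_left (le_W1 hp hq hf) ht
  · rcases eq_or_lt_of_le ht with rfl | ht'
    · simpa using norm1_nonneg x
    · rw [← le_div_iff₀' ht']
      apply W1_le
      intro f hf
      rw [le_div_iff₀' ht', ← abs_of_pos ht', ← abs_mul,
        ← pair_eq x ht hp hq hx hf]
      exact pair_le_norm1 x hf
      
theorem pair_add (x y : Mspace X) {f : X → ℝ} {K : NNReal} (hf : LipschitzWith K f) :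
    pair (x + y) f = pair x f + pair y f := by
  obtain ⟨t, p, q, ht, hp, hq, hx⟩ := rep_of_mem x.2
  obtain ⟨u, a, b, hu, ha, hb, hy⟩ := rep_of_mem y.2
  have hxy : ((x + y : Mspace X) : {s : Set X // MeasurableSet s} → ℝ)
      = embF t p q + embF u a b := by
    rw [Submodule.coe_add, hx, hy]
  rcases eq_or_lt_of_le (by positivity : (0:ℝ) ≤ t + u) with h0 | h0
  · have ht0 : t = 0 := by linarith
    have hu0 : u = 0 := by linarith
    rw [pair_eq x ht hp hq hx hf, pair_eq y hu ha hb hy hf,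
      pair_eq (x + y) (t := 0) (le_refl _) hp hq ?_ hf, ht0, hu0]
    · ring
    · rw [hxy]; simp [ht0, hu0, embF_zero]
  · have hP := memDelta1_smul_add hp ha (a := t/(t+u)) (b := u/(t+u))
      (by positivity) (by positivity) (by field_simp)
    have hQ := memDelta1_smul_add hq hb (a := t/(t+u)) (b := u/(t+u))
      (by positivity) (by positivity) (by field_simp)
    rw [pair_eq (x + y) (le_of_lt h0) hP hQ
        (by rw [hxy, embF_add ht hu hp hq ha hb h0]) hf,
      pair_eq x ht hp hq hx hf, pair_eq y hu ha hb hy hf,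
      integral_smul_add_measure (hp.integrable hf) (ha.integrable hf)
        (by positivity) (by positivity),
      integral_smul_add_measure (hq.integrable hf) (hb.integrable hf)
        (by positivity) (by positivity)]
    field_simp
    ring

theorem pair_smul (c : ℝ) (x : Mspace X) {f : X → ℝ} {K : NNReal} (hf : LipschitzWith K f) :
    pair (c • x) f = c * pair x f := by
  obtain ⟨t, p, q, ht, hp, hq, hx⟩ := rep_of_mem x.2
  rcases le_or_gt 0 c with hc | hc
  · rw [pair_eq (c • x) (t := c * t) (by positivity) hp hq
      (by rw [Submodule.coe_smul, hx, embF_smul_nonneg t hc]) hf,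
      pair_eq x ht hp hq hx hf]
    ring
  · rw [pair_eq (c • x) (t := (-c) * t) (by nlinarith) hq hp
      (by rw [Submodule.coe_smul, hx, embF_smul_neg t]) hf,
      pair_eq x ht hp hq hx hf]
    ring

theorem pair_neg (x : Mspace X) {f : X → ℝ} {K : NNReal} (hf : LipschitzWith K f) :
    pair (-x) f = - pair x f := by
  have h2 : (-1 : ℝ) • x = -x := neg_one_smul ℝ x
  have := pair_smul (-1) x hf
  rw [h2] at this
  rw [this]; ring

theorem norm1_add_le (x y : Mspace X) : norm1 (x + y) ≤ norm1 x + norm1 y := by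
  apply norm1_le
  intro f hf
  rw [pair_add x y hf]
  exact (abs_add_le _ _).trans (add_le_add (pair_le_norm1 x hf) (pair_le_norm1 y hf))

theorem norm1_neg (x : Mspace X) : norm1 (-x) = norm1 x := by
  unfold norm1
  congr 1
  funext f
  rw [pair_neg x f.2, abs_neg]

theorem norm1_smul_nonneg {c : ℝ} (hc : 0 ≤ c) (x : Mspace X) :
    norm1 (c • x) = c * norm1 x := by
  apply le_antisymm
  · apply norm1_le
    intro f hf
    rw [pair_smul c x hf, abs_mul, abs_of_nonneg hc]
    exact mul_le_mul_of_nonneg_left (pair_le_norm1 x hf) hc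
  · rcases eq_or_lt_of_le hc with rfl | hc'
    · simpa using norm1_nonneg (0 : Mspace X)
    · rw [← le_div_iff₀' hc']
      apply norm1_le
      intro f hf
      rw [le_div_iff₀' hc']
      have h3 : c * |pair x f| = |pair (c • x) f| := by
        rw [pair_smul c x hf, abs_mul, abs_of_pos hc']
      rw [h3]
      exact pair_le_norm1 (c • x) hf

theorem norm1_zero : norm1 (0 : Mspace X) = 0 := by
  have := norm1_smul_nonneg (le_refl (0:ℝ)) (0 : Mspace X)
  rw [zero_smul] at this
  simpa using this

end Emb
section Density

set_option linter.unusedSectionVars false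
set_option maxHeartbeats 1000000
variable {X : Type*} [MetricSpace X] [TopologicalSpace.SeparableSpace X] [MeasurableSpace X] [BorelSpace X]

theorem memDelta1_finsupp {N : ℕ} {w : Fin N → ℝ} {pt : Fin N → X}
    (hw : ∀ i, 0 ≤ w i) (hw1 : ∑ i, w i = 1) :
    MemDelta1 (∑ i, ENNReal.ofReal (w i) • Measure.dirac (pt i)) := by
  constructor
  · constructor
    rw [Measure.finset_sum_apply]
    have : ∀ i ∈ Finset.univ, (ENNReal.ofReal (w i) • Measure.dirac (pt i)) Set.univ
        = ENNReal.ofReal (w i) := by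
      intro i _
      simp [Measure.smul_apply]
    rw [Finset.sum_congr rfl this, ← ENNReal.ofReal_sum_of_nonneg (fun i _ => hw i), hw1]
    simp
  · intro f hf
    apply integrable_finset_sum_measure.mpr
    intro i _
    exact ((memDelta1_dirac (pt i)).2 f hf).smul_measure ENNReal.ofReal_ne_top

theorem integral_finsupp {N : ℕ} {w : Fin N → ℝ} {pt : Fin N → X}
    (hw : ∀ i, 0 ≤ w i) {f : X → ℝ} {K : NNReal} (hf : LipschitzWith K f) :
    ∫ x, f x ∂(∑ i, ENNReal.ofReal (w i) • Measure.dirac (pt i))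
      = ∑ i, w i * f (pt i) := by
  rw [integral_finset_sum_measure (fun i _ =>
    ((memDelta1_dirac (pt i)).2 f ⟨K, hf⟩).smul_measure ENNReal.ofReal_ne_top)]
  apply Finset.sum_congr rfl
  intro i _
  rw [integral_smul_measure, ENNReal.toReal_ofReal (hw i),
    integral_dirac' f (pt i) hf.continuous.measurable.stronglyMeasurable]
  simp

/-- Density of finitely supported measures in Δ₁ for the W1 distance. -/
theorem exists_finsupp_approx (x₀ : X) {p : Measure X} (hp : MemDelta1 p)
    {ε : ℝ} (hε : 0 < ε) :
    ∃ (N : ℕ) (w : Fin N → ℝ) (pt : Fin N → X),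
      (∀ i, 0 ≤ w i) ∧ (∑ i, w i = 1) ∧
      W1 p (∑ i, ENNReal.ofReal (w i) • Measure.dirac (pt i)) ≤ ε := by
  haveI : Nonempty X := ⟨x₀⟩
  haveI hfin : IsFiniteMeasure p := hp.isFiniteMeasure
  haveI hprob : IsProbabilityMeasure p := hp.1
  obtain ⟨u, hu⟩ := TopologicalSpace.exists_dense_seq X
  set r : ℝ := ε / 2 with hr
  have hr0 : 0 < r := by positivity
  set A : ℕ → Set X := disjointed (fun n => Metric.ball (u n) r) with hA
  have hAmeas : ∀ n, MeasurableSet (A n) :=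
    MeasurableSet.disjointed fun n => measurableSet_ball
  have hAdisj : Pairwise (Function.onFun Disjoint A) := disjoint_disjointed _
  have hAsub : ∀ n, A n ⊆ Metric.ball (u n) r := fun n => disjointed_subset _ n
  have hAunion : ⋃ n, A n = Set.univ := by
    rw [hA, iUnion_disjointed]
    apply Set.eq_univ_of_forall
    intro x
    obtain ⟨n, hn⟩ := hu.exists_dist_lt x hr0
    exact Set.mem_iUnion.mpr ⟨n, by simpa [Metric.mem_ball, dist_comm] using hn⟩
  -- the control function
  set G : X → ℝ := fun x => 1 + dist x x₀ with hG
  have hGint : Integrable G p := (integrable_const 1).add (hp.integrable_dist x₀)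
  have hGnonneg : ∀ x, 0 ≤ G x := fun x => by
    have h := dist_nonneg (x := x) (y := x₀)
    show 0 ≤ 1 + dist x x₀
    linarith
  have hsum : HasSum (fun n => ∫ x in A n, G x ∂p) (∫ x, G x ∂p) := by
    have := hasSum_integral_iUnion hAmeas hAdisj (f := G)
      (by rw [hAunion]; exact hGint.integrableOn)
    rwa [hAunion, Measure.restrict_univ] at this
  -- choose a tail cutoff
  have : ∀ᶠ N in Filter.atTop, |∑ n ∈ Finset.range N, ∫ x in A n, G x ∂p - ∫ x, G x ∂p| < r/2 := by
    have := hsum.tendsto_sum_nat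
    rw [Metric.tendsto_atTop] at this
    obtain ⟨N₀, hN₀⟩ := this (r/2) (by positivity)
    exact Filter.eventually_atTop.mpr ⟨N₀, fun N hN => by
      simpa [Real.dist_eq] using hN₀ N hN⟩
  obtain ⟨N, hN⟩ := this.exists
  -- the partition: A 0, ..., A (N-1), and the rest T
  set S : Set X := ⋃ n ∈ Finset.range N, A n with hS
  have hSmeas : MeasurableSet S := (Finset.range N).measurableSet_biUnion fun n _ => hAmeas n
  set T : Set X := Sᶜ with hT
  have hTmeas : MeasurableSet T := hSmeas.compl
  have hSsplit : ∀ {f : X → ℝ}, Integrable f p →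
      ∫ x, f x ∂p = (∑ n ∈ Finset.range N, ∫ x in A n, f x ∂p) + ∫ x in T, f x ∂p := by
    intro f hf
    rw [← integral_biUnion_finset (Finset.range N) (fun n _ => hAmeas n)
      ((hAdisj.set_pairwise _).mono' (by intro a b h; exact h)) (fun n _ => hf.integrableOn)]
    rw [← hS, hT, integral_add_compl hSmeas hf]
  -- tail bound
  have htail : ∫ x in T, G x ∂p < r/2 := by
    have := hSsplit hGint
    have h2 : |∑ n ∈ Finset.range N, ∫ x in A n, G x ∂p - ∫ x, G x ∂p|
        = ∫ x in T, G x ∂p := by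
      rw [this]; rw [abs_sub_comm]
      rw [show (∑ n ∈ Finset.range N, ∫ x in A n, G x ∂p) + (∫ x in T, G x ∂p)
          - (∑ n ∈ Finset.range N, ∫ x in A n, G x ∂p) = ∫ x in T, G x ∂p by ring]
      exact abs_of_nonneg (integral_nonneg hGnonneg)
    rw [← h2]; exact hN
  -- define the approximating data
  refine ⟨N + 1, fun i => if h : (i : ℕ) < N then (p (A i)).toReal else (p T).toReal,
    fun i => if h : (i : ℕ) < N then u i else x₀, ?_, ?_, ?_⟩
  · intro i
    by_cases h : (i : ℕ) < N <;> simp [h, ENNReal.toReal_nonneg]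
  · -- total mass 1
    rw [Fin.sum_univ_castSucc]
    have h1 : ∀ i : Fin N, (if h : ((Fin.castSucc i : Fin (N+1)) : ℕ) < N
        then (p (A ((Fin.castSucc i : Fin (N+1)) : ℕ))).toReal else (p T).toReal)
        = (p (A i)).toReal := by
      intro i; rw [dif_pos (by simpa using i.isLt)]; rfl
    rw [Finset.sum_congr rfl fun i _ => h1 i, dif_neg (by simp)]
    have hps : p S = ∑ n ∈ Finset.range N, p (A n) :=
      measure_biUnion_finset ((hAdisj.set_pairwise _).mono' fun a b h => h)
        (fun n _ => hAmeas n)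
    have hst : p S + p T = 1 := by
      rw [hT, measure_add_measure_compl hSmeas]; exact measure_univ
    have : (p S).toReal + (p T).toReal = 1 := by
      rw [← ENNReal.toReal_add (measure_ne_top p S) (measure_ne_top p T), hst]; rfl
    rw [← this, hps, ENNReal.toReal_sum (fun n _ => measure_ne_top p _),
      ← Fin.sum_univ_eq_sum_range (fun n => (p (A n)).toReal) N]
  · -- W1 bound
    apply W1_le
    intro f hf
    -- compute the integral against the discrete measure
    rw [integral_finsupp (fun i => by by_cases h : (i : ℕ) < N <;>
      simp [h, ENNReal.toReal_nonneg]) hf]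
    rw [Fin.sum_univ_castSucc]
    have h1 : ∀ i : Fin N,
        ((if h : ((Fin.castSucc i : Fin (N+1)) : ℕ) < N
          then (p (A ((Fin.castSucc i : Fin (N+1)) : ℕ))).toReal else (p T).toReal) *
         f (if h : ((Fin.castSucc i : Fin (N+1)) : ℕ) < N
          then u ((Fin.castSucc i : Fin (N+1)) : ℕ) else x₀))
        = (p (A i)).toReal * f (u i) := by
      intro i
      rw [dif_pos (by simpa using i.isLt), dif_pos (by simpa using i.isLt)]
      rfl
    rw [Finset.sum_congr rfl fun i _ => h1 i, dif_neg (by simp), dif_neg (by simp),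
      Fin.sum_univ_eq_sum_range (fun n => (p (A n)).toReal * f (u n)) N]
    -- split the integral against p
    rw [hSsplit (hp.integrable hf)]
    have hintf : Integrable f p := hp.integrable hf
    have key : ∀ n, ∫ x in A n, f x ∂p - (p (A n)).toReal * f (u n)
        = ∫ x in A n, (f x - f (u n)) ∂p := by
      intro n
      rw [integral_sub hintf.integrableOn (integrable_const _).integrableOn,
        setIntegral_const]
      simp [Measure.real]
    have keyT : ∫ x in T, f x ∂p - (p T).toReal * f x₀
        = ∫ x in T, (f x - f x₀) ∂p := by
      rw [integral_sub hintf.integrableOn (integrable_const _).integrableOn,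
        setIntegral_const]
      simp [Measure.real]
    have hdiff : (∑ n ∈ Finset.range N, ∫ x in A n, f x ∂p) + (∫ x in T, f x ∂p)
        - ((∑ n ∈ Finset.range N, (p (A n)).toReal * f (u n)) + (p T).toReal * f x₀)
        = (∑ n ∈ Finset.range N, ∫ x in A n, (f x - f (u n)) ∂p)
          + ∫ x in T, (f x - f x₀) ∂p := by
      have hsum2 : ∑ n ∈ Finset.range N, ∫ x in A n, (f x - f (u n)) ∂p
          = ∑ n ∈ Finset.range N,
            (∫ x in A n, f x ∂p - (p (A n)).toReal * f (u n)) :=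
        Finset.sum_congr rfl fun n _ => (key n).symm
      rw [hsum2, Finset.sum_sub_distrib, ← keyT]
      ring
    rw [hdiff]
    -- bound each term
    have hbound : ∀ n, |∫ x in A n, (f x - f (u n)) ∂p| ≤ r * (p (A n)).toReal := by
      intro n
      have h2 : |∫ x in A n, (f x - f (u n)) ∂p| ≤ ∫ x in A n, |f x - f (u n)| ∂p := by
        simpa using norm_integral_le_integral_norm (μ := p.restrict (A n))
          (fun x => f x - f (u n))
      have h3 : ∫ x in A n, |f x - f (u n)| ∂p ≤ ∫ x in A n, r ∂p := by
        apply setIntegral_mono_on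
          ((hintf.sub (integrable_const _)).abs).integrableOn
          (integrable_const _).integrableOn (hAmeas n)
        intro x hx
        have h4 := hf.dist_le_mul x (u n)
        rw [NNReal.coe_one, one_mul, Real.dist_eq] at h4
        have h5 : dist x (u n) < r := by
          have := hAsub n hx; rwa [Metric.mem_ball] at this
        simp only [Pi.sub_apply]
        linarith
      have h6 : ∫ x in A n, r ∂p = (p (A n)).toReal * r := by
        rw [setIntegral_const]; simp [mul_comm, Measure.real]
      calc |∫ x in A n, (f x - f (u n)) ∂p| ≤ ∫ x in A n, r ∂p := h2.trans h3
        _ = r * (p (A n)).toReal := by rw [h6]; ring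
    have hboundT : |∫ x in T, (f x - f x₀) ∂p| ≤ r/2 := by
      have h2 : |∫ x in T, (f x - f x₀) ∂p| ≤ ∫ x in T, |f x - f x₀| ∂p := by
        simpa using norm_integral_le_integral_norm (μ := p.restrict T)
          (fun x => f x - f x₀)
      have h3 : ∫ x in T, |f x - f x₀| ∂p ≤ ∫ x in T, G x ∂p := by
        apply setIntegral_mono_on
          ((hintf.sub (integrable_const _)).abs).integrableOn
          hGint.integrableOn hTmeas
        intro x _
        have h4 := hf.dist_le_mul x x₀
        rw [NNReal.coe_one, one_mul, Real.dist_eq] at h4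
        have h5 : dist x x₀ ≤ G x := by
          show dist x x₀ ≤ 1 + dist x x₀; linarith
        simp only [Pi.sub_apply]
        linarith
      linarith [htail]
    have hmass : ∑ n ∈ Finset.range N, r * (p (A n)).toReal ≤ r := by
      rw [← Finset.mul_sum]
      have hps : p S = ∑ n ∈ Finset.range N, p (A n) :=
        measure_biUnion_finset ((hAdisj.set_pairwise _).mono' fun a b h => h)
          (fun n _ => hAmeas n)
      have h7 : ∑ n ∈ Finset.range N, (p (A n)).toReal ≤ 1 := by
        rw [← ENNReal.toReal_sum (fun n _ => measure_ne_top p _), ← hps]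
        have := prob_le_one (μ := p) (s := S)
        calc (p S).toReal ≤ (1 : ENNReal).toReal :=
            ENNReal.toReal_mono (by simp) this
          _ = 1 := by simp
      nlinarith [hr0.le]
    calc |(∑ n ∈ Finset.range N, ∫ x in A n, (f x - f (u n)) ∂p)
          + ∫ x in T, (f x - f x₀) ∂p|
        ≤ |∑ n ∈ Finset.range N, ∫ x in A n, (f x - f (u n)) ∂p|
          + |∫ x in T, (f x - f x₀) ∂p| := abs_add_le _ _
      _ ≤ (∑ n ∈ Finset.range N, |∫ x in A n, (f x - f (u n)) ∂p|) + r/2 :=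
          add_le_add (Finset.abs_sum_le_sum_abs _ _) hboundT
      _ ≤ (∑ n ∈ Finset.range N, r * (p (A n)).toReal) + r/2 :=
          add_le_add_left (Finset.sum_le_sum fun n _ => hbound n) _
      _ ≤ r + r/2 := add_le_add_left hmass _
      _ ≤ ε := by rw [hr]; linarith

end Density
section Cone

set_option linter.unusedSectionVars false
set_option maxHeartbeats 1600000
variable {X : Type*} [MetricSpace X] [MeasurableSpace X] [BorelSpace X]
variable {R : Measure X → Measure X → Prop}

/-- Mixture relation preservation: the crucial "closedness" consequence of the
Lipschitz axiom. If `¬ R p̄ q̄`, the whole cone `{t(p−q) : R p q}` stays at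
`norm1`-distance at least `K` from `p̄ − q̄`. -/
theorem cone_far [Nonempty X] (hLip : LipschitzPre R) (hAff : AffinePre R)
    (hrefl : ∀ p : Measure X, MemDelta1 p → R p p)
    {pb qb : Measure X} (hpb : MemDelta1 pb) (hqb : MemDelta1 qb) (hnot : ¬ R pb qb) :
    ∃ K : ℝ, 0 < K ∧ ∀ (x : Mspace X) (t : ℝ) (p q : Measure X), 0 ≤ t →
      MemDelta1 p → MemDelta1 q → R p q →
      (x : {s : Set X // MeasurableSet s} → ℝ) = embF t p q - embF 1 pb qb →
      K ≤ norm1 x := by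
  obtain ⟨K, hK, hKspec⟩ := hLip qb pb hqb hpb hnot
  refine ⟨K, hK, ?_⟩
  intro x t p q ht hp hq hR hx
  by_contra hcon
  push_neg at hcon
  -- the canonical representation of pb − qb − t(p−q)
  set s : ℝ := 1 + t with hs
  have hs0 : (0:ℝ) < s := by linarith
  set a : Measure X := ENNReal.ofReal (1/s) • pb + ENNReal.ofReal (t/s) • q with ha
  set b : Measure X := ENNReal.ofReal (1/s) • qb + ENNReal.ofReal (t/s) • p with hb
  have hamem : MemDelta1 a := memDelta1_smul_add hpb hq (by positivity) (by positivity)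
    (by field_simp; exact hs.symm)
  have hbmem : MemDelta1 b := memDelta1_smul_add hqb hp (by positivity) (by positivity)
    (by field_simp; exact hs.symm)
  have hnx : ((-x : Mspace X) : {s : Set X // MeasurableSet s} → ℝ) = embF s a b := by
    rw [Submodule.coe_neg, hx]
    funext σ
    have h1 := toReal_smul_add hpb hq (a := 1/s) (b := t/s)
      (by positivity) (by positivity) σ.1
    have h2 := toReal_smul_add hqb hp (a := 1/s) (b := t/s)
      (by positivity) (by positivity) σ.1
    simp only [Pi.neg_apply, Pi.sub_apply, embF, ← ha, ← hb, h1, h2]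
    rw [ha, hb, h1, h2]
    field_simp
    ring
  have hWab : (1 + t) * W1 a b < K := by
    have := norm1_eq (-x) (le_of_lt hs0) hamem hbmem hnx
    rw [norm1_neg] at this
    rw [← hs]
    linarith [this ▸ hcon]
  have hW0 : 0 ≤ W1 a b := W1_nonneg a b
  -- the mixture weight
  set lam : ℝ := s / (1 + s) with hlam
  have hlam0 : 0 ≤ lam := by positivity
  have hlam1 : lam ≤ 1 := by
    rw [hlam, div_le_one (by linarith)]; linarith
  have hlamlt : lam < K / (K + W1 a b) := by
    rw [div_lt_div_iff₀ (by linarith) (by linarith)]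
    nlinarith [hWab]
  have hnotmix := hKspec a b hamem hbmem lam hlam0 hlamlt
  -- but the two mixtures ARE related, contradiction
  apply hnotmix
  -- mixtures: α := mix pb b lam, β := mix qb a lam
  rcases eq_or_lt_of_le ht with rfl | ht'
  · -- t = 0 : the two mixtures are equal
    have hab : mix pb b lam = mix qb a lam := by
      unfold mix
      haveI := hpb.isFiniteMeasure; haveI := hqb.isFiniteMeasure
      haveI := hamem.isFiniteMeasure; haveI := hbmem.isFiniteMeasure
      apply measure_eq_of_toReal (by linarith) hlam0 (by linarith) hlam0
      intro σ hσ
      have h1 := toReal_smul_add hpb hq (a := 1/s) (b := 0/s)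
        (by positivity) (by positivity) σ
      have h2 := toReal_smul_add hqb hp (a := 1/s) (b := 0/s)
        (by positivity) (by positivity) σ
      rw [ha, hb] at *
      rw [h1, h2]
      have hs1 : s = 1 := by rw [hs]; ring
      rw [hs1]
      norm_num
      ring
    rw [hab]
    exact hrefl _ (mix_memDelta1 hqb hamem hlam0 hlam1)
  · -- t > 0 : two applications of affinity
    set lamh : ℝ := t / (1 + s + t) with hlamh
    have hlamh0 : 0 < lamh := by positivity
    have hlamh1 : lamh < 1 := by
      rw [hlamh, div_lt_one (by linarith)]; linarith
    have hamem' : MemDelta1 (mix pb b lam) := mix_memDelta1 hpb hbmem hlam0 hlam1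
    have hbmem' : MemDelta1 (mix qb a lam) := mix_memDelta1 hqb hamem hlam0 hlam1
    -- step 1 : R p q ↔ R (mix p β (1−λ̂)) (mix q β (1−λ̂))
    have step1 := (hAff p q (mix qb a lam) hp hq hbmem' (1 - lamh)
      (by linarith) (by linarith)).mp hR
    -- step 2 : R α β ↔ R (mix α q λ̂) (mix β q λ̂)
    have step2 := hAff (mix pb b lam) (mix qb a lam) q hamem' hbmem' hq lamh
      (le_of_lt hlamh0) hlamh1
    -- claim A : mix α q λ̂ = mix p β (1−λ̂)
    have claimA : mix (mix pb b lam) q lamh = mix p (mix qb a lam) (1 - lamh) := by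
      unfold mix
      haveI := hpb.isFiniteMeasure; haveI := hqb.isFiniteMeasure
      haveI := hp.isFiniteMeasure; haveI := hq.isFiniteMeasure
      haveI := hamem.isFiniteMeasure; haveI := hbmem.isFiniteMeasure
      haveI : IsFiniteMeasure (ENNReal.ofReal (1 - lam) • pb + ENNReal.ofReal lam • b) :=
        hamem'.isFiniteMeasure
      haveI : IsFiniteMeasure (ENNReal.ofReal (1 - lam) • qb + ENNReal.ofReal lam • a) :=
        hbmem'.isFiniteMeasure
      apply measure_eq_of_toReal (by linarith) (le_of_lt hlamh0)
        (by linarith) (by linarith)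
      intro σ hσ
      have h1 := toReal_smul_add hpb hbmem (a := 1 - lam) (b := lam)
        (by linarith) hlam0 σ
      have h2 := toReal_smul_add hqb hamem (a := 1 - lam) (b := lam)
        (by linarith) hlam0 σ
      have h3 := toReal_smul_add hpb hq (a := 1/s) (b := t/s)
        (by positivity) (by positivity) σ
      have h4 := toReal_smul_add hqb hp (a := 1/s) (b := t/s)
        (by positivity) (by positivity) σ
      rw [ha, hb] at *
      show (1 - lamh) * ((ENNReal.ofReal (1 - lam) • pb
          + ENNReal.ofReal lam • (ENNReal.ofReal (1/s) • qb + ENNReal.ofReal (t/s) • p) :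
            Measure X) σ).toReal + lamh * ((q σ).toReal)
        = (1 - (1 - lamh)) * ((p σ).toReal) + (1 - lamh) *
          (((ENNReal.ofReal (1 - lam) • qb
          + ENNReal.ofReal lam • (ENNReal.ofReal (1/s) • pb + ENNReal.ofReal (t/s) • q) :
            Measure X) σ).toReal)
      rw [h1, h2, h3, h4]
      have e1 : 1 - lam = 1 / (1 + s) := by rw [hlam]; field_simp; ring
      have e2 : 1 - lamh = (1 + s) / (1 + s + t) := by rw [hlamh]; field_simp; ring
      rw [e1, e2, hlam, hlamh]
      field_simp
      ring
    -- claim B : mix β q λ̂ = mix q β (1−λ̂)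
    have claimB : mix (mix qb a lam) q lamh = mix q (mix qb a lam) (1 - lamh) := by
      unfold mix
      have e3 : (1 : ℝ) - (1 - lamh) = lamh := by ring
      rw [e3, add_comm]
    rw [← claimA, ← claimB] at step1
    exact step2.mpr step1

end Cone
section Separation

set_option linter.unusedSectionVars false
set_option maxHeartbeats 1600000
variable {X : Type*} [MetricSpace X] [TopologicalSpace.SeparableSpace X]
  [MeasurableSpace X] [BorelSpace X]
variable {R : Measure X → Measure X → Prop}

theorem comb_eq_mix (p q : Measure X) {a b : ℝ} (hab : a + b = 1) :
    ENNReal.ofReal a • p + ENNReal.ofReal b • q = mix p q b := by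
  unfold mix
  rw [show (1:ℝ) - b = a by linarith]

/-- R is preserved under mixing related pairs. -/
theorem R_comb (hAff : AffinePre R)
    (htrans : ∀ p q r : Measure X, MemDelta1 p → MemDelta1 q → MemDelta1 r →
      R p q → R q r → R p r)
    {p q a b : Measure X} (hp : MemDelta1 p) (hq : MemDelta1 q)
    (ha : MemDelta1 a) (hb : MemDelta1 b) (hpq : R p q) (hab : R a b)
    {mu : ℝ} (h0 : 0 ≤ mu) (h1 : mu ≤ 1) :
    R (mix p a mu) (mix q b mu) := by
  rcases eq_or_lt_of_le h1 with rfl | hlt1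
  · -- mu = 1
    have e : ∀ x y : Measure X, mix x y 1 = y := by
      intro x y; unfold mix; simp
    rw [e, e]; exact hab
  rcases eq_or_lt_of_le h0 with h0' | hlt0
  · -- mu = 0
    have e : ∀ x y : Measure X, mix x y 0 = x := by
      intro x y; unfold mix; simp
    rw [← h0', e, e]; exact hpq
  · -- 0 < mu < 1
    have s1 : R (mix p a mu) (mix q a mu) :=
      (hAff p q a hp hq ha mu (le_of_lt hlt0) hlt1).mp hpq
    have s2 : R (mix a q (1 - mu)) (mix b q (1 - mu)) :=
      (hAff a b q ha hb hq (1 - mu) (by linarith) (by linarith)).mp hab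
    have e1 : mix a q (1 - mu) = mix q a mu := by
      unfold mix
      rw [show (1:ℝ) - (1 - mu) = mu by ring, add_comm]
    have e2 : mix b q (1 - mu) = mix q b mu := by
      unfold mix
      rw [show (1:ℝ) - (1 - mu) = mu by ring, add_comm]
    rw [e1, e2] at s2
    exact htrans _ _ _ (mix_memDelta1 hp ha (le_of_lt hlt0) h1)
      (mix_memDelta1 hq ha (le_of_lt hlt0) h1)
      (mix_memDelta1 hq hb (le_of_lt hlt0) h1) s1 s2

/-- The full separation theorem: a strictly separating 1-Lipschitz utility. -/
theorem exists_separating (hLip : LipschitzPre R) (hAff : AffinePre R)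
    (hrefl : ∀ p : Measure X, MemDelta1 p → R p p)
    (htrans : ∀ p q r : Measure X, MemDelta1 p → MemDelta1 q → MemDelta1 r →
      R p q → R q r → R p r)
    {pb qb : Measure X} (hpb : MemDelta1 pb) (hqb : MemDelta1 qb) (hnot : ¬ R pb qb) :
    ∃ u : X → ℝ, LipschitzWith 1 u ∧
      (∀ p q : Measure X, MemDelta1 p → MemDelta1 q → R p q →
        ∫ x, u x ∂q ≤ ∫ x, u x ∂p) ∧
      (∫ x, u x ∂pb) < ∫ x, u x ∂qb := by
  haveI : Nonempty X := hpb.nonempty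
  set x₀ : X := Classical.arbitrary X with hx₀
  -- the cone
  set Cset : Set (Mspace X) := {c | ∃ t p q, 0 ≤ t ∧ MemDelta1 p ∧ MemDelta1 q ∧ R p q ∧
    (c : {s : Set X // MeasurableSet s} → ℝ) = embF t p q} with hCset
  have hC0 : (0 : Mspace X) ∈ Cset := by
    refine ⟨0, Measure.dirac x₀, Measure.dirac x₀, le_refl _, memDelta1_dirac _,
      memDelta1_dirac _, hrefl _ (memDelta1_dirac _), ?_⟩
    rw [Submodule.coe_zero, embF_zero]
  have hCadd : ∀ c₁ ∈ Cset, ∀ c₂ ∈ Cset, c₁ + c₂ ∈ Cset := by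
    rintro c₁ ⟨t, p, q, ht, hp, hq, hpq, hc₁⟩ c₂ ⟨v, a, b, hv, ha, hb, hab, hc₂⟩
    rcases eq_or_lt_of_le (by positivity : (0:ℝ) ≤ t + v) with h0 | h0
    · have ht0 : t = 0 := by linarith
      have hv0 : v = 0 := by linarith
      refine ⟨0, p, q, le_refl _, hp, hq, hpq, ?_⟩
      rw [Submodule.coe_add, hc₁, hc₂]
      simp [ht0, hv0, embF_zero]
    · have hmu0 : 0 ≤ v / (t + v) := by positivity
      have hmu1 : v / (t + v) ≤ 1 := by
        rw [div_le_one h0]; linarith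
      have hcomb : t / (t + v) + v / (t + v) = 1 := by field_simp
      refine ⟨t + v, _, _, le_of_lt h0,
        memDelta1_smul_add hp ha (by positivity) (by positivity) hcomb,
        memDelta1_smul_add hq hb (by positivity) (by positivity) hcomb, ?_, ?_⟩
      · rw [comb_eq_mix p a hcomb, comb_eq_mix q b hcomb]
        exact R_comb hAff htrans hp hq ha hb hpq hab hmu0 hmu1
      · rw [Submodule.coe_add, hc₁, hc₂, embF_add ht hv hp hq ha hb h0]
  have hCsmul : ∀ k : ℝ, 0 ≤ k → ∀ c ∈ Cset, k • c ∈ Cset := by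
    rintro k hk c ⟨t, p, q, ht, hp, hq, hpq, hc⟩
    exact ⟨k * t, p, q, by positivity, hp, hq, hpq, by
      rw [Submodule.coe_smul, hc, embF_smul_nonneg t hk]⟩
  -- the target point
  have hx0mem : embF 1 pb qb ∈ Mspace X := mem_Mspace_of zero_le_one hpb hqb
  set xe : Mspace X := ⟨embF 1 pb qb, hx0mem⟩ with hxe
  have hxene : xe ≠ 0 := by
    intro h
    apply hnot
    have hembzero : embF 1 pb qb = 0 := congrArg Subtype.val h
    have hpbqb : pb = qb := by
      haveI := hpb.isFiniteMeasure; haveI := hqb.isFiniteMeasure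
      ext s hs
      have := congrFun hembzero ⟨s, hs⟩
      simp only [embF, Pi.zero_apply, one_mul] at this
      have h2 : (pb s).toReal = (qb s).toReal := by linarith
      exact (ENNReal.toReal_eq_toReal_iff' (measure_ne_top pb s) (measure_ne_top qb s)).mp h2
    rw [hpbqb]
    exact hrefl _ hqb
  -- the sublinear gauge
  set N : Mspace X → ℝ := fun y => sInf ((fun c => norm1 (y + c)) '' Cset) with hN
  have hNset_ne : ∀ y : Mspace X, ((fun c => norm1 (y + c)) '' Cset).Nonempty :=
    fun y => ⟨norm1 (y + 0), Set.mem_image_of_mem _ hC0⟩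
  have hNset_bdd : ∀ y : Mspace X, BddBelow ((fun c => norm1 (y + c)) '' Cset) := by
    intro y
    refine ⟨0, ?_⟩
    rintro r ⟨c, _, rfl⟩
    exact norm1_nonneg _
  have hN_le : ∀ (y : Mspace X), ∀ c ∈ Cset, N y ≤ norm1 (y + c) := by
    intro y c hc
    exact csInf_le (hNset_bdd y) (Set.mem_image_of_mem _ hc)
  have hN_nonneg : ∀ y : Mspace X, 0 ≤ N y := by
    intro y
    apply le_csInf (hNset_ne y)
    rintro r ⟨c, _, rfl⟩
    exact norm1_nonneg _
  have hN_le_norm1 : ∀ y : Mspace X, N y ≤ norm1 y := by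
    intro y
    have := hN_le y 0 hC0
    rwa [add_zero] at this
  have hN_exists : ∀ (y : Mspace X) {ε : ℝ}, 0 < ε → ∃ c ∈ Cset, norm1 (y + c) < N y + ε := by
    intro y ε hε
    have hNy : N y = sInf ((fun c => norm1 (y + c)) '' Cset) := rfl
    obtain ⟨r, hr, hrlt⟩ := exists_lt_of_csInf_lt (hNset_ne y)
      (show sInf ((fun c => norm1 (y + c)) '' Cset) < N y + ε by rw [← hNy]; linarith)
    obtain ⟨c, hc, rfl⟩ := hr
    exact ⟨c, hc, hrlt⟩
  have hN_add : ∀ y z : Mspace X, N (y + z) ≤ N y + N z := by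
    intro y z
    by_contra hcon
    push_neg at hcon
    set ε : ℝ := (N (y + z) - (N y + N z)) / 3 with hε
    have hε0 : 0 < ε := by simp only [hε]; linarith
    obtain ⟨c₁, hc₁, h₁⟩ := hN_exists y hε0
    obtain ⟨c₂, hc₂, h₂⟩ := hN_exists z hε0
    have key : N (y + z) ≤ norm1 ((y + z) + (c₁ + c₂)) :=
      hN_le _ _ (hCadd c₁ hc₁ c₂ hc₂)
    have e : (y + z) + (c₁ + c₂) = (y + c₁) + (z + c₂) := by abel
    rw [e] at key
    have := norm1_add_le (y + c₁) (z + c₂)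
    simp only [hε] at h₁ h₂
    linarith
  have hN_hom : ∀ k : ℝ, 0 < k → ∀ y : Mspace X, N (k • y) = k * N y := by
    have main : ∀ k : ℝ, 0 < k → ∀ y : Mspace X, N (k • y) ≤ k * N y := by
      intro k hk y
      by_contra hcon
      push_neg at hcon
      set ε : ℝ := (N (k • y) - k * N y) / (2 * k) with hε
      have hε0 : 0 < ε := by
        apply div_pos; linarith; linarith
      obtain ⟨c, hc, hlt⟩ := hN_exists y hε0
      have key : N (k • y) ≤ norm1 (k • y + k • c) := hN_le _ _ (hCsmul k (le_of_lt hk) c hc)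
      rw [← smul_add, norm1_smul_nonneg (le_of_lt hk)] at key
      have : k * norm1 (y + c) < k * (N y + ε) := by
        exact mul_lt_mul_of_pos_left hlt hk
      simp only [hε] at this
      have hk' : k * ((N (k • y) - k * N y) / (2 * k)) = (N (k • y) - k * N y) / 2 := by
        field_simp
      rw [mul_add, hk'] at this
      linarith
    intro k hk y
    apply le_antisymm (main k hk y)
    have h2 := main k⁻¹ (by positivity) (k • y)
    rw [inv_smul_smul₀ (ne_of_gt hk)] at h2
    calc k * N y ≤ k * (k⁻¹ * N (k • y)) := by
          apply mul_le_mul_of_nonneg_left h2 (le_of_lt hk)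
      _ = N (k • y) := by field_simp
  -- the key lower bound from the Lipschitz axiom
  obtain ⟨K, hK, hKfar⟩ := cone_far hLip hAff hrefl hpb hqb hnot
  have hNxe : K ≤ N (-xe) := by
    apply le_csInf (hNset_ne (-xe))
    rintro r ⟨c, hc, rfl⟩
    obtain ⟨t, p, q, ht, hp, hq, hpq, hcrep⟩ := hc
    apply hKfar (-xe + c) t p q ht hp hq hpq
    rw [Submodule.coe_add, Submodule.coe_neg, hcrep, hxe]
    abel
  -- Hahn–Banach
  have hfle : ∀ y : (LinearPMap.mkSpanSingleton (K := ℝ) (L := ℝ) (σ := RingHom.id ℝ) xe (-N (-xe)) hxene).domain,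
      (LinearPMap.mkSpanSingleton (K := ℝ) (L := ℝ) (σ := RingHom.id ℝ) xe (-N (-xe)) hxene) y ≤ N y := by
    rintro ⟨y, hy⟩
    obtain ⟨c, rfl⟩ := Submodule.mem_span_singleton.mp hy
    rw [LinearPMap.mkSpanSingleton'_apply]
    show c • -N (-xe) ≤ N (c • xe)
    rcases le_or_gt 0 c with hc | hc
    · have : c • -N (-xe) ≤ 0 := by
        rw [smul_eq_mul]
        have := hN_nonneg (-xe)
        nlinarith
      exact this.trans (hN_nonneg _)
    · have e : c • xe = (-c) • (-xe) := by rw [smul_neg, neg_smul, neg_neg]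
      rw [e, hN_hom (-c) (by linarith) (-xe), smul_eq_mul]
      exact le_of_eq (by ring)
  obtain ⟨g, hg1, hg2⟩ := exists_extension_of_le_sublinear
    (LinearPMap.mkSpanSingleton (K := ℝ) (L := ℝ) (σ := RingHom.id ℝ) xe (-N (-xe)) hxene) N
    (fun c hc y => hN_hom c hc y) hN_add hfle
  have hgxe : g xe = -N (-xe) := by
    have h := hg1 ⟨xe, Submodule.mem_span_singleton_self xe⟩
    rw [LinearPMap.mkSpanSingleton_apply] at h
    exact h
  have hg_abs : ∀ y : Mspace X, |g y| ≤ norm1 y := by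
    intro y
    rw [abs_le]
    constructor
    · have := (hg2 (-y)).trans (hN_le_norm1 (-y))
      rw [map_neg, norm1_neg] at this
      linarith
    · exact (hg2 y).trans (hN_le_norm1 y)
  have hg_cone : ∀ c ∈ Cset, 0 ≤ g c := by
    intro c hc
    have h1 : g (-c) ≤ N (-c) := hg2 (-c)
    have h2 : N (-c) ≤ norm1 (-c + c) := hN_le (-c) c hc
    rw [neg_add_cancel, norm1_zero] at h2
    rw [map_neg] at h1
    linarith
  -- the utility function
  have hDmem : ∀ x : X, embF 1 (Measure.dirac x) (Measure.dirac x₀) ∈ Mspace X :=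
    fun x => mem_Mspace_of zero_le_one (memDelta1_dirac x) (memDelta1_dirac x₀)
  set D : X → Mspace X := fun x => ⟨embF 1 (Measure.dirac x) (Measure.dirac x₀), hDmem x⟩
    with hD
  set u : X → ℝ := fun x => g (D x) with hu
  have hDsub : ∀ x y : X, ((D x - D y : Mspace X) : {s : Set X // MeasurableSet s} → ℝ)
      = embF 1 (Measure.dirac x) (Measure.dirac y) := by
    intro x y
    rw [Submodule.coe_sub]
    funext σ
    simp only [hD, embF, Pi.sub_apply]
    ring
  have hW1dirac : ∀ x y : X, W1 (Measure.dirac x) (Measure.dirac y) ≤ dist x y := by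
    intro x y
    apply W1_le
    intro f hf
    rw [integral_dirac' f x hf.continuous.measurable.stronglyMeasurable,
      integral_dirac' f y hf.continuous.measurable.stronglyMeasurable]
    have := hf.dist_le_mul x y
    rwa [NNReal.coe_one, one_mul, Real.dist_eq] at this
  have hulip : LipschitzWith 1 u := by
    apply LipschitzWith.of_dist_le_mul
    intro x y
    rw [NNReal.coe_one, one_mul, Real.dist_eq, hu]
    show |g (D x) - g (D y)| ≤ dist x y
    rw [← map_sub]
    calc |g (D x - D y)| ≤ norm1 (D x - D y) := hg_abs _
      _ = 1 * W1 (Measure.dirac x) (Measure.dirac y) :=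
          norm1_eq _ zero_le_one (memDelta1_dirac _) (memDelta1_dirac _) (hDsub x y)
      _ ≤ dist x y := by rw [one_mul]; exact hW1dirac x y
  -- value of g on finitely supported differences
  have hfing : ∀ (n : ℕ) (w : Fin n → ℝ) (pt : Fin n → X) (m : ℕ) (w' : Fin m → ℝ)
      (pt' : Fin m → X), (∀ i, 0 ≤ w i) → (∑ i, w i = 1) → (∀ j, 0 ≤ w' j) →
      (∑ j, w' j = 1) →
      ∀ h : embF 1 (∑ i, ENNReal.ofReal (w i) • Measure.dirac (pt i))
        (∑ j, ENNReal.ofReal (w' j) • Measure.dirac (pt' j)) ∈ Mspace X,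
      g ⟨_, h⟩ = (∑ i, w i * u (pt i)) - ∑ j, w' j * u (pt' j) := by
    intro n w pt m w' pt' hw hw1 hw' hw1' hmem
    have htoReal : ∀ (k : ℕ) (v : Fin k → ℝ) (z : Fin k → X), (∀ i, 0 ≤ v i) →
        ∀ σ : Set X,
        ((∑ i, ENNReal.ofReal (v i) • Measure.dirac (z i) : Measure X) σ).toReal
          = ∑ i, v i * ((Measure.dirac (z i) : Measure X) σ).toReal := by
      intro k v z hv σ
      rw [Measure.finset_sum_apply, ENNReal.toReal_sum]
      · apply Finset.sum_congr rfl
        intro i _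
        rw [Measure.smul_apply, smul_eq_mul, ENNReal.toReal_mul,
          ENNReal.toReal_ofReal (hv i)]
      · intro i _
        exact ENNReal.mul_ne_top ENNReal.ofReal_ne_top (measure_ne_top _ _)
    have hdecomp : (⟨_, hmem⟩ : Mspace X)
        = (∑ i, w i • D (pt i)) - (∑ j, w' j • D (pt' j)) := by
      have hcoe : ∀ (k : ℕ) (v : Fin k → ℝ) (z : Fin k → X),
          ((∑ i, v i • D (z i) : Mspace X) : {s : Set X // MeasurableSet s} → ℝ)
            = ∑ i, v i • (embF 1 (Measure.dirac (z i)) (Measure.dirac x₀)) := by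
        intro k v z
        rw [← Submodule.coe_subtype, map_sum]
        apply Finset.sum_congr rfl
        intro i _
        rw [_root_.map_smul]
        rfl
      apply Subtype.coe_injective
      show (embF 1 (∑ i, ENNReal.ofReal (w i) • Measure.dirac (pt i))
          (∑ j, ENNReal.ofReal (w' j) • Measure.dirac (pt' j)) :
            {s : Set X // MeasurableSet s} → ℝ)
        = (((∑ i, w i • D (pt i)) - (∑ j, w' j • D (pt' j)) : Mspace X) :
            {s : Set X // MeasurableSet s} → ℝ)
      rw [Submodule.coe_sub, hcoe, hcoe]
      funext σ
      have e1 := htoReal n w pt hw σ.1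
      have e2 := htoReal m w' pt' hw' σ.1
      simp only [embF, Pi.sub_apply, Finset.sum_apply, Pi.smul_apply,
        smul_eq_mul, one_mul, e1, e2]
      simp only [mul_sub]
      rw [Finset.sum_sub_distrib, Finset.sum_sub_distrib, ← Finset.sum_mul,
        ← Finset.sum_mul, hw1, hw1']
      ring
    rw [hdecomp, map_sub, map_sum, map_sum]
    simp only [_root_.map_smul, smul_eq_mul]
    rfl
  -- representation of g by integration against u
  have hrep : ∀ (p q : Measure X), MemDelta1 p → MemDelta1 q →
      ∀ h : embF 1 p q ∈ Mspace X,
      g ⟨embF 1 p q, h⟩ = (∫ x, u x ∂p) - ∫ x, u x ∂q := by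
    intro p q hp hq hmem
    have main : ∀ ε : ℝ, 0 < ε →
        |g ⟨embF 1 p q, hmem⟩ - ((∫ x, u x ∂p) - ∫ x, u x ∂q)| ≤ 4 * ε := by
      intro ε hε
      obtain ⟨n, w, pt, hw, hw1, hWp⟩ := exists_finsupp_approx x₀ hp hε
      obtain ⟨m, w', pt', hw', hw1', hWq⟩ := exists_finsupp_approx x₀ hq hε
      set pf : Measure X := ∑ i, ENNReal.ofReal (w i) • Measure.dirac (pt i) with hpf
      set qf : Measure X := ∑ j, ENNReal.ofReal (w' j) • Measure.dirac (pt' j) with hqf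
      have hpfd : MemDelta1 pf := memDelta1_finsupp hw hw1
      have hqfd : MemDelta1 qf := memDelta1_finsupp hw' hw1'
      have hmemB : embF 1 pf qf ∈ Mspace X := mem_Mspace_of zero_le_one hpfd hqfd
      have hmemC1 : embF 1 p pf ∈ Mspace X := mem_Mspace_of zero_le_one hp hpfd
      have hmemC2 : embF 1 q qf ∈ Mspace X := mem_Mspace_of zero_le_one hq hqfd
      have hA : (⟨embF 1 p q, hmem⟩ : Mspace X)
          = ⟨embF 1 pf qf, hmemB⟩ + ⟨embF 1 p pf, hmemC1⟩ - ⟨embF 1 q qf, hmemC2⟩ := by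
        apply Subtype.coe_injective
        show (embF 1 p q : {s : Set X // MeasurableSet s} → ℝ)
          = (((⟨embF 1 pf qf, hmemB⟩ : Mspace X) + ⟨embF 1 p pf, hmemC1⟩
              - ⟨embF 1 q qf, hmemC2⟩ : Mspace X) : {s : Set X // MeasurableSet s} → ℝ)
        rw [Submodule.coe_sub, Submodule.coe_add]
        funext σ
        simp only [embF, Pi.sub_apply, Pi.add_apply]
        ring
      have hgA : g ⟨embF 1 p q, hmem⟩ = g ⟨embF 1 pf qf, hmemB⟩
          + g ⟨embF 1 p pf, hmemC1⟩ - g ⟨embF 1 q qf, hmemC2⟩ := by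
        rw [hA, map_sub, map_add]
      have hgB : g ⟨embF 1 pf qf, hmemB⟩ = (∫ x, u x ∂pf) - ∫ x, u x ∂qf := by
        rw [hfing n w pt m w' pt' hw hw1 hw' hw1' hmemB,
          integral_finsupp hw hulip, integral_finsupp hw' hulip]
      have hC1 : |g ⟨embF 1 p pf, hmemC1⟩| ≤ ε := by
        calc |g ⟨embF 1 p pf, hmemC1⟩| ≤ norm1 ⟨embF 1 p pf, hmemC1⟩ := hg_abs _
          _ = 1 * W1 p pf := norm1_eq _ zero_le_one hp hpfd rfl
          _ ≤ ε := by rw [one_mul]; exact hWp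
      have hC2 : |g ⟨embF 1 q qf, hmemC2⟩| ≤ ε := by
        calc |g ⟨embF 1 q qf, hmemC2⟩| ≤ norm1 ⟨embF 1 q qf, hmemC2⟩ := hg_abs _
          _ = 1 * W1 q qf := norm1_eq _ zero_le_one hq hqfd rfl
          _ ≤ ε := by rw [one_mul]; exact hWq
      have hIp : |(∫ x, u x ∂p) - ∫ x, u x ∂pf| ≤ ε := by
        have := abs_integral_sub_le_W1 hp hpfd hulip
        rw [NNReal.coe_one, one_mul] at this
        linarith
      have hIq : |(∫ x, u x ∂q) - ∫ x, u x ∂qf| ≤ ε := by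
        have := abs_integral_sub_le_W1 hq hqfd hulip
        rw [NNReal.coe_one, one_mul] at this
        linarith
      obtain ⟨hC1a, hC1b⟩ := abs_le.mp hC1
      obtain ⟨hC2a, hC2b⟩ := abs_le.mp hC2
      obtain ⟨hIpa, hIpb⟩ := abs_le.mp hIp
      obtain ⟨hIqa, hIqb⟩ := abs_le.mp hIq
      rw [abs_le]
      constructor <;> [nlinarith [hgA, hgB]; nlinarith [hgA, hgB]]
    by_contra hne
    have hne' : g ⟨embF 1 p q, hmem⟩ - ((∫ x, u x ∂p) - ∫ x, u x ∂q) ≠ 0 := by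
      intro h; exact hne (by linarith [sub_eq_zero.mp h])
    have habs : 0 < |g ⟨embF 1 p q, hmem⟩ - ((∫ x, u x ∂p) - ∫ x, u x ∂q)| :=
      abs_pos.mpr hne'
    have := main (|g ⟨embF 1 p q, hmem⟩ - ((∫ x, u x ∂p) - ∫ x, u x ∂q)| / 8)
      (by positivity)
    linarith
  -- conclusions
  refine ⟨u, hulip, ?_, ?_⟩
  · intro p q hp hq hpq
    have hmem : embF 1 p q ∈ Mspace X := mem_Mspace_of zero_le_one hp hq
    have h0 : 0 ≤ g ⟨embF 1 p q, hmem⟩ :=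
      hg_cone _ ⟨1, p, q, zero_le_one, hp, hq, hpq, rfl⟩
    rw [hrep p q hp hq hmem] at h0
    linarith
  · have h1 : g xe ≤ -K := by rw [hgxe]; linarith [hNxe]
    have h2 : g xe = (∫ x, u x ∂pb) - ∫ x, u x ∂qb := hrep pb qb hpb hqb hx0mem
    linarith

end Separation
theorem stmt12 {X : Type*} [MetricSpace X] [TopologicalSpace.SeparableSpace X]
    [MeasurableSpace X] [BorelSpace X]
    (R : Measure X → Measure X → Prop)
    (hrefl : ∀ p : Measure X, MemDelta1 p → R p p)
    (htrans : ∀ p q r : Measure X, MemDelta1 p → MemDelta1 q → MemDelta1 r →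
      R p q → R q r → R p r) :
    (LipschitzPre R ∧ AffinePre R) ↔
    ∃ 𝒰 : Set (X → ℝ), 𝒰.Nonempty ∧ (∀ u ∈ 𝒰, IsLip u) ∧
      ∀ p q : Measure X, MemDelta1 p → MemDelta1 q →
        (R p q ↔ ∀ u ∈ 𝒰, ∫ x, u x ∂q ≤ ∫ x, u x ∂p) := by
  constructor
  · rintro ⟨hLip, hAff⟩
    refine ⟨{u | IsLip u ∧ ∀ p q : Measure X, MemDelta1 p → MemDelta1 q → R p q →
      ∫ x, u x ∂q ≤ ∫ x, u x ∂p}, ?_, ?_, ?_⟩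
    · exact ⟨fun _ => 0, ⟨1, LipschitzWith.const' 0⟩, fun p q _ _ _ => by simp⟩
    · exact fun u hu => hu.1
    · intro p q hp hq
      constructor
      · exact fun hR u hu => hu.2 p q hp hq hR
      · intro h
        by_contra hnot
        obtain ⟨u, hulip, hmono, hsep⟩ := exists_separating hLip hAff hrefl htrans hp hq hnot
        have hu𝒰 : u ∈ {u | IsLip u ∧ ∀ p q : Measure X, MemDelta1 p → MemDelta1 q →
            R p q → ∫ x, u x ∂q ≤ ∫ x, u x ∂p} := ⟨⟨1, hulip⟩, hmono⟩
        have := h u hu𝒰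
        linarith
  · rintro ⟨𝒰, hne, hlip𝒰, hiff⟩
    constructor
    · -- Lipschitz
      intro p q hp hq hnot
      rw [hiff q p hq hp] at hnot
      push_neg at hnot
      obtain ⟨u, hu𝒰, hlt⟩ := hnot
      obtain ⟨L, hL⟩ := hlip𝒰 u hu𝒰
      have hL' : LipschitzWith (L + 1) u := hL.weaken le_self_add
      have hLpos : (0:ℝ) < (L + 1 : NNReal) := by positivity
      set δ : ℝ := (∫ x, u x ∂p) - ∫ x, u x ∂q with hδ
      have hδpos : 0 < δ := by simp only [hδ]; linarith
      refine ⟨δ / (L + 1 : NNReal), by positivity, ?_⟩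
      intro p' q' hp' hq' lam hlam0 hlamlt
      intro hcon
      set K : ℝ := δ / (L + 1 : NNReal) with hK
      have hW0 : 0 ≤ W1 p' q' := W1_nonneg p' q'
      have hKpos : 0 < K := by positivity
      have hlam1 : lam < 1 := by
        have h2 : K / (K + W1 p' q') ≤ 1 := by
          apply div_le_one_of_le₀ (by linarith) (by linarith)
        linarith
      have hmq : MemDelta1 (mix q q' lam) := mix_memDelta1 hq hq' hlam0 (le_of_lt hlam1)
      have hmp : MemDelta1 (mix p p' lam) := mix_memDelta1 hp hp' hlam0 (le_of_lt hlam1)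
      have hineq := (hiff _ _ hmq hmp).mp hcon u hu𝒰
      rw [integral_mix (hp.integrable hL') (hp'.integrable hL') hlam0 (le_of_lt hlam1),
        integral_mix (hq.integrable hL') (hq'.integrable hL') hlam0 (le_of_lt hlam1)]
        at hineq
      have hWb := abs_integral_sub_le_W1 hp' hq' hL'
      have hcross : lam * (K + W1 p' q') < K := by
        rw [lt_div_iff₀ (by linarith)] at hlamlt
        linarith
      have habs := abs_le.mp hWb
      have hKey : lam * ((L + 1 : NNReal) : ℝ) * W1 p' q' < (1 - lam) * δ := by
        have h3 : lam * W1 p' q' < (1 - lam) * K := by nlinarith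
        have h4 : (1 - lam) * K * ((L + 1 : NNReal) : ℝ) = (1 - lam) * δ := by
          rw [hK]; field_simp
        nlinarith
      nlinarith [habs.1, habs.2, hineq]
    · -- Affine
      intro p q r hp hq hr lam hlam0 hlam1
      have hmp : MemDelta1 (mix p r lam) := mix_memDelta1 hp hr hlam0 (le_of_lt hlam1)
      have hmq : MemDelta1 (mix q r lam) := mix_memDelta1 hq hr hlam0 (le_of_lt hlam1)
      rw [hiff p q hp hq, hiff _ _ hmp hmq]
      have key : ∀ u ∈ 𝒰, (∫ x, u x ∂(mix q r lam) ≤ ∫ x, u x ∂(mix p r lam))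
          ↔ (∫ x, u x ∂q ≤ ∫ x, u x ∂p) := by
        intro u hu
        obtain ⟨L, hL⟩ := hlip𝒰 u hu
        rw [integral_mix (hp.integrable hL) (hr.integrable hL) hlam0 (le_of_lt hlam1),
          integral_mix (hq.integrable hL) (hr.integrable hL) hlam0 (le_of_lt hlam1)]
        constructor
        · intro h
          have h2 : (1 - lam) * (∫ x, u x ∂q) ≤ (1 - lam) * ∫ x, u x ∂p := by linarith
          exact le_of_mul_le_mul_left h2 (by linarith)
        · intro h
          nlinarith
      constructor
      · intro h u hu
        rw [key u hu]
        exact h u hu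
      · intro h u hu
        rw [← key u hu]
        exact h u hu
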